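/- Let τ = (1+√5)/2 be the golden ratio and let μ be the uniform distribution on the 12 vertices of a regular icosahedron inscribed in the unit sphere S² of ℝ³, given by the unit vectors (0, ±1, ±τ)/√(1+τ²), (±τ, 0, ±1)/√(1+τ²), and (±1, ±τ, 0)/√(1+τ²). Then g*(μ) = (1+√5)/6. -/

import Mathlib

open MeasureTheory Real
open scoped ENNReal

noncomputable section

abbrev E3 := EuclideanSpace ℝ (Fin 3)

/-- The unit sphere S² in ℝ³. -/
def unitSphere : Set E3 := Metric.sphere (0 : E3) 1

/-- `g C μ` is the supremum over unit vectors `v` of `∫ √(C² + (1−C²)⟨r,v⟩²) dμ(r)`. -/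
def g (C : ℝ) (μ : Measure E3) : ℝ :=
  ⨆ v : unitSphere, ∫ r, Real.sqrt (C ^ 2 + (1 - C ^ 2) * (inner ℝ r (v : E3) : ℝ) ^ 2) ∂μ


/-- `gstar μ` is the supremum over unit vectors `v` of `∫ |⟨r,v⟩| dμ(r)`. -/
def gstar (μ : Measure E3) : ℝ :=
  ⨆ v : unitSphere, ∫ r, |(inner ℝ r (v : E3) : ℝ)| ∂μ

/-- The vector `(a, b, c)` in ℝ³. -/
def vec3 (a b c : ℝ) : E3 := (WithLp.equiv 2 (Fin 3 → ℝ)).symm ![a, b, c]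

/-- The golden ratio `τ = (1+√5)/2`. -/
def gold : ℝ := (1 + Real.sqrt 5) / 2

/-- The normalization factor `√(1+τ²)`. -/
def icoNorm : ℝ := Real.sqrt (1 + gold ^ 2)

/-- The uniform distribution on the 12 vertices `(0, ±1, ±τ)/√(1+τ²)`,
`(±τ, 0, ±1)/√(1+τ²)`, `(±1, ±τ, 0)/√(1+τ²)` of a regular icosahedron inscribed
in the unit sphere S² of ℝ³. -/
def icosahedronUniform : Measure E3 :=
  (12 : ℝ≥0∞)⁻¹ •
    (Measure.dirac (vec3 0 (1 / icoNorm) (gold / icoNorm))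
      + Measure.dirac (vec3 0 (1 / icoNorm) (-(gold / icoNorm)))
      + Measure.dirac (vec3 0 (-(1 / icoNorm)) (gold / icoNorm))
      + Measure.dirac (vec3 0 (-(1 / icoNorm)) (-(gold / icoNorm)))
      + Measure.dirac (vec3 (gold / icoNorm) 0 (1 / icoNorm))
      + Measure.dirac (vec3 (gold / icoNorm) 0 (-(1 / icoNorm)))
      + Measure.dirac (vec3 (-(gold / icoNorm)) 0 (1 / icoNorm))
      + Measure.dirac (vec3 (-(gold / icoNorm)) 0 (-(1 / icoNorm)))
      + Measure.dirac (vec3 (1 / icoNorm) (gold / icoNorm) 0)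
      + Measure.dirac (vec3 (1 / icoNorm) (-(gold / icoNorm)) 0)
      + Measure.dirac (vec3 (-(1 / icoNorm)) (gold / icoNorm) 0)
      + Measure.dirac (vec3 (-(1 / icoNorm)) (-(gold / icoNorm)) 0))

/-! Antipodal vertices contribute equally, so for a unit vector `v = (a, b, c)` the average of
`|⟨r, v⟩|` over the vertices is `1 / (6 √(τ + 2))` times `∑ |b ± τ c| + |τ a ± c| + |a ± τ b|`.
As `|x + y| + |x - y| = 2 max |x| |y|`, this sum is twice the largest of eight linear forms in
`(|a|, |b|, |c|)`, each bounded by `τ √(τ + 2)` by Cauchy–Schwarz; hence `g* ≤ τ / 3 = (1 + √5) / 6`,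
with equality when `v` is a vertex. -/

lemma abs_add_add_abs_sub (x y : ℝ) : |x + y| + |x - y| = 2 * max |x| |y| := by
  rcases abs_cases x with hx | hx <;> rcases abs_cases y with hy | hy <;>
    rcases abs_cases (x + y) with hs | hs <;> rcases abs_cases (x - y) with hd | hd <;>
    rcases max_cases |x| |y| with hm | hm <;> linarith

lemma le_of_sq_add_sq_add_sq_le {p q r x y z N : ℝ} (hN : 0 ≤ N)
    (hpqr : p ^ 2 + q ^ 2 + r ^ 2 ≤ N ^ 2) (hxyz : x ^ 2 + y ^ 2 + z ^ 2 ≤ 1) :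
    p * x + q * y + r * z ≤ N := by
  refine le_of_sq_le_sq ?_ hN
  nlinarith [sq_nonneg (p * y - q * x), sq_nonneg (p * z - r * x), sq_nonneg (q * z - r * y),
    mul_le_mul_of_nonneg_left hxyz (by positivity : 0 ≤ p ^ 2 + q ^ 2 + r ^ 2)]

section Golden

variable {τ n a b c : ℝ}

/-- Each of the eight ways of resolving the maxima is a linear form in `(|a|, |b|, |c|)` whose
coefficient vector has squared length at most `4τ + 3 = (τ n)²`; apply Cauchy–Schwarz. -/
lemma max_add_max_add_max_le (hτ : τ ^ 2 = τ + 1) (hτ0 : 0 ≤ τ) (hn : n ^ 2 = τ + 2)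
    (hn0 : 0 ≤ n) (habc : a ^ 2 + b ^ 2 + c ^ 2 = 1) :
    max |b| (τ * |c|) + max (τ * |a|) |c| + max |a| (τ * |b|) ≤ τ * n := by
  have key : ∀ p q r, p ^ 2 + q ^ 2 + r ^ 2 ≤ 4 * τ + 3 → p * |a| + q * |b| + r * |c| ≤ τ * n :=
    fun p q r h => le_of_sq_add_sq_add_sq_le (by positivity) (by nlinarith)
      (by simp only [sq_abs]; linarith)
  simp only [max_add, add_max, max_le_iff]
  refine ⟨⟨⟨?_, ?_⟩, ?_, ?_⟩, ⟨?_, ?_⟩, ?_, ?_⟩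
  · linarith [key (τ + 1) 1 0 (by nlinarith)]
  · linarith [key (τ + 1) 0 τ (by nlinarith)]
  · linarith [key 1 1 1 (by nlinarith)]
  · linarith [key 1 0 (τ + 1) (by nlinarith)]
  · linarith [key τ (τ + 1) 0 (by nlinarith)]
  · linarith [key τ τ τ (by nlinarith)]
  · linarith [key 0 (τ + 1) 1 (by nlinarith)]
  · linarith [key 0 τ (τ + 1) (by nlinarith)]

lemma sum_abs_golden_forms_le (hτ : τ ^ 2 = τ + 1) (hτ0 : 0 ≤ τ) (hn : n ^ 2 = τ + 2)
    (hn0 : 0 ≤ n) (habc : a ^ 2 + b ^ 2 + c ^ 2 = 1) :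
    |b + τ * c| + |b - τ * c| + |τ * a + c| + |τ * a - c| + |a + τ * b| + |a - τ * b| ≤
      2 * τ * n := by
  have hbc := abs_add_add_abs_sub b (τ * c)
  have hac := abs_add_add_abs_sub (τ * a) c
  have hab := abs_add_add_abs_sub a (τ * b)
  simp only [abs_mul, abs_of_nonneg hτ0] at hbc hac hab
  linarith [max_add_max_add_max_le hτ hτ0 hn hn0 habc]

end Golden

section DiracSum

variable {α : Type*} [MeasurableSpace α] [MeasurableSingletonClass α] [Neg α]

lemma integral_smul_sum_dirac_add_dirac_neg {ι : Type*} (s : Finset ι) (x : ι → α) (c : ℝ≥0∞)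
    {f : α → ℝ} (hf : ∀ a, f (-a) = f a) :
    ∫ a, f a ∂(c • ∑ i ∈ s, (Measure.dirac (x i) + Measure.dirac (-x i))) =
      2 * c.toReal * ∑ i ∈ s, f (x i) := by
  have hint : ∀ a : α, Integrable f (Measure.dirac a) := fun a => integrable_dirac enorm_lt_top
  rw [integral_smul_measure, integral_finsetSum_measure fun i _ => (hint _).add_measure (hint _)]
  simp only [integral_add_measure (hint _) (hint _), integral_dirac, hf, Finset.mul_sum,
    smul_eq_mul]
  ring_nf

end DiracSum

lemma neg_vec3 (x y z : ℝ) : -vec3 x y z = vec3 (-x) (-y) (-z) := by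
  ext i; fin_cases i <;> simp [vec3]

lemma smul_vec3 (c x y z : ℝ) : c • vec3 x y z = vec3 (c * x) (c * y) (c * z) := by
  ext i; fin_cases i <;> simp [vec3]

lemma inner_vec3 (x y z : ℝ) (w : E3) :
    inner ℝ (vec3 x y z) w = x * w 0 + y * w 1 + z * w 2 := by
  simp [vec3, PiLp.inner_apply, Fin.sum_univ_three]
  ring

lemma norm_vec3 (x y z : ℝ) : ‖vec3 x y z‖ = √(x ^ 2 + y ^ 2 + z ^ 2) := by
  simp [EuclideanSpace.norm_eq, vec3, Fin.sum_univ_three]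

lemma sq_add_sq_add_sq_of_mem_unitSphere {v : E3} (hv : v ∈ unitSphere) :
    v 0 ^ 2 + v 1 ^ 2 + v 2 ^ 2 = 1 := by
  have := EuclideanSpace.real_norm_sq_eq v
  rw [mem_sphere_zero_iff_norm.1 hv, Fin.sum_univ_three] at this
  linarith

lemma gold_sq : gold ^ 2 = gold + 1 := goldenRatio_sq

lemma gold_pos : 0 < gold := goldenRatio_pos

lemma two_mul_gold : 2 * gold = 1 + √5 := by
  rw [gold]; ring

lemma icoNorm_sq : icoNorm ^ 2 = gold + 2 := by
  rw [icoNorm, sq_sqrt (by positivity), gold_sq]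
  ring

lemma icoNorm_pos : 0 < icoNorm := sqrt_pos.2 (by positivity)

def icoDirection : Fin 6 → E3 :=
  ![vec3 0 1 gold, vec3 0 1 (-gold), vec3 gold 0 1, vec3 gold 0 (-1), vec3 1 gold 0,
    vec3 1 (-gold) 0]

lemma icosahedronUniform_eq : icosahedronUniform = (12 : ℝ≥0∞)⁻¹ •
    ∑ i, (Measure.dirac (icoNorm⁻¹ • icoDirection i) +
      Measure.dirac (-(icoNorm⁻¹ • icoDirection i))) := by
  simp only [icosahedronUniform, Fin.sum_univ_succ, Fin.sum_univ_zero, icoDirection,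
    Matrix.cons_val_zero, Matrix.cons_val_succ, smul_vec3, neg_vec3, mul_zero, mul_one, neg_zero,
    mul_neg, neg_neg, div_eq_inv_mul, add_zero]
  congr 1
  ac_rfl

lemma integral_abs_inner_icosahedronUniform (v : E3) :
    ∫ r, |inner ℝ r v| ∂icosahedronUniform =
      (∑ i, |inner ℝ (icoDirection i) v|) / (6 * icoNorm) := by
  rw [icosahedronUniform_eq,
    integral_smul_sum_dirac_add_dirac_neg _ _ _ fun r => by rw [inner_neg_left, abs_neg]]
  simp only [inner_smul_left, abs_mul, conj_trivial, abs_inv, abs_of_pos icoNorm_pos,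
    ← Finset.mul_sum, ENNReal.toReal_inv, ENNReal.toReal_ofNat]
  field_simp
  ring

lemma sum_abs_inner_icoDirection (v : E3) :
    ∑ i, |inner ℝ (icoDirection i) v| =
      |v 1 + gold * v 2| + |v 1 - gold * v 2| + |gold * v 0 + v 2| + |gold * v 0 - v 2| +
        |v 0 + gold * v 1| + |v 0 - gold * v 1| := by
  simp only [Fin.sum_univ_six, icoDirection, Matrix.cons_val, inner_vec3]
  ring_nf

lemma integral_abs_inner_icosahedronUniform_le {v : E3} (hv : v ∈ unitSphere) :
    ∫ r, |inner ℝ r v| ∂icosahedronUniform ≤ (1 + √5) / 6 := by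
  rw [integral_abs_inner_icosahedronUniform, sum_abs_inner_icoDirection,
    div_le_iff₀ (by linarith [icoNorm_pos])]
  calc _ ≤ 2 * gold * icoNorm := sum_abs_golden_forms_le gold_sq gold_pos.le icoNorm_sq
        icoNorm_pos.le (sq_add_sq_add_sq_of_mem_unitSphere hv)
    _ = _ := by rw [two_mul_gold]; ring

lemma norm_icoDirection_zero : ‖icoDirection 0‖ = icoNorm := by
  simp [icoDirection, norm_vec3, icoNorm]

def icoVertex : E3 := icoNorm⁻¹ • icoDirection 0

lemma icoVertex_mem : icoVertex ∈ unitSphere := by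
  rw [icoVertex, unitSphere, mem_sphere_zero_iff_norm, norm_smul, norm_icoDirection_zero, norm_inv,
    norm_of_nonneg icoNorm_pos.le, inv_mul_cancel₀ icoNorm_pos.ne']

lemma inner_vec3_vec3 (x y z x' y' z' : ℝ) :
    inner ℝ (vec3 x y z) (vec3 x' y' z') = x * x' + y * y' + z * z' :=
  inner_vec3 x y z _

lemma integral_abs_inner_icoVertex :
    ∫ r, |inner ℝ r icoVertex| ∂icosahedronUniform = (1 + √5) / 6 := by
  rw [integral_abs_inner_icosahedronUniform, icoVertex]
  simp only [inner_smul_right, abs_mul, abs_inv, abs_of_pos icoNorm_pos, ← Finset.mul_sum,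
    Fin.sum_univ_six, icoDirection, Matrix.cons_val, inner_vec3_vec3]
  have hsq : gold * gold = gold + 1 := by rw [← sq, gold_sq]
  simp only [mul_zero, zero_mul, mul_one, one_mul, add_zero, zero_add, neg_mul, hsq,
    abs_neg, abs_of_pos gold_pos]
  rw [abs_of_pos (by linarith [gold_pos]), show 1 + -(gold + 1) = -gold by ring, abs_neg,
    abs_of_pos gold_pos]
  field_simp
  rw [icoNorm_sq, div_eq_iff (by linarith [gold_pos]), ← two_mul_gold]
  linear_combination (-2) * gold_sq

/-- For the uniform distribution `μ` on the 12 vertices of a regular icosahedron inscribed in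
the unit sphere S² of ℝ³, one has `g*(μ) = (1+√5)/6`. -/
theorem gstar_icosahedron : gstar icosahedronUniform = (1 + Real.sqrt 5) / 6 := by
  have hle : ∀ v : unitSphere, ∫ r, |inner ℝ r (v : E3)| ∂icosahedronUniform ≤ (1 + √5) / 6 :=
    fun v => integral_abs_inner_icosahedronUniform_le v.2
  have : Nonempty unitSphere := ⟨⟨_, icoVertex_mem⟩⟩
  exact le_antisymm (ciSup_le hle) <| le_ciSup_of_le ⟨_, Set.forall_mem_range.2 hle⟩
    ⟨_, icoVertex_mem⟩ integral_abs_inner_icoVertex.ge
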